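/- arXiv:1905.10342 — 2 statements merged into one kernel-verified Lean document; each statement's English description precedes it below -/
import Mathlib

section
/- For every σ > 0, ∫₀^π sin²θ / (σ² + sin²(θ/2))^{3/2} dθ ≤ 8 · arsinh(1/σ), where arsinh is the inverse hyperbolic sine. -/
/-!
Writing `sin θ = 2 sin (θ/2) cos (θ/2)` and using `sin² (θ/2) ≤ σ² + sin² (θ/2)`, `cos (θ/2) ≤ 1`,
the integrand is at most `4 cos (θ/2) / √(σ² + sin² (θ/2))`. The substitution `t = sin (θ/2)`
turns the integral of this majorant into `8 ∫₀¹ dt / √(σ² + t²) = 8 arsinh (1/σ)`.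
-/

open Real

lemma hasDerivAt_arsinh_div {σ : ℝ} (hσ : 0 < σ) (x : ℝ) :
    HasDerivAt (fun x => arsinh (x / σ)) (1 / √(σ ^ 2 + x ^ 2)) x := by
  refine ((hasDerivAt_arsinh (x / σ)).comp x ((hasDerivAt_id x).div_const σ)).congr_deriv ?_
  rw [show σ ^ 2 + x ^ 2 = σ ^ 2 * (1 + (x / σ) ^ 2) by field_simp, sqrt_mul (sq_nonneg σ),
    sqrt_sq hσ.le]
  simp [field]

lemma continuous_one_div_sqrt_sq_add_sq {σ : ℝ} (hσ : σ ≠ 0) :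
    Continuous fun x : ℝ => 1 / √(σ ^ 2 + x ^ 2) :=
  continuous_const.div (by fun_prop) fun x => by positivity

lemma integral_one_div_sqrt_sq_add_sq {σ : ℝ} (hσ : 0 < σ) (b : ℝ) :
    ∫ x in (0:ℝ)..b, 1 / √(σ ^ 2 + x ^ 2) = arsinh (b / σ) := by
  rw [intervalIntegral.integral_eq_sub_of_hasDerivAt (fun x _ => hasDerivAt_arsinh_div hσ x)
    ((continuous_one_div_sqrt_sq_add_sq hσ.ne').intervalIntegrable 0 b)]
  simp

lemma integral_cos_half_div_sqrt {σ : ℝ} (hσ : 0 < σ) :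
    ∫ θ in (0:ℝ)..π, cos (θ / 2) / √(σ ^ 2 + sin (θ / 2) ^ 2) = 2 * arsinh (1 / σ) := by
  have hsub : ∫ θ in (0:ℝ)..π, 1 / √(σ ^ 2 + sin (θ / 2) ^ 2) * (cos (θ / 2) * (1 / 2))
      = ∫ x in (0:ℝ)..1, 1 / √(σ ^ 2 + x ^ 2) := by
    convert intervalIntegral.integral_comp_mul_deriv (f' := fun θ => cos (θ / 2) * (1 / 2))
      (fun θ _ => ((hasDerivAt_id' θ).div_const 2).sin)
      (by fun_prop) (continuous_one_div_sqrt_sq_add_sq hσ.ne') using 2 <;> simp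
  calc ∫ θ in (0:ℝ)..π, cos (θ / 2) / √(σ ^ 2 + sin (θ / 2) ^ 2)
      = 2 * ∫ θ in (0:ℝ)..π, 1 / √(σ ^ 2 + sin (θ / 2) ^ 2) * (cos (θ / 2) * (1 / 2)) := by
        rw [← intervalIntegral.integral_const_mul]
        congr 1 with θ
        ring
    _ = 2 * arsinh (1 / σ) := by rw [hsub, integral_one_div_sqrt_sq_add_sq hσ]

lemma sq_mul_div_rpow_le {a t c : ℝ} (ht : t ^ 2 ≤ a) (hc₀ : 0 ≤ c) (hc₁ : c ≤ 1) :
    (t * c) ^ 2 / a ^ ((3:ℝ) / 2) ≤ c / √a := by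
  rcases ((sq_nonneg t).trans ht).eq_or_lt with rfl | ha
  · simp
  · rw [show (3:ℝ) / 2 = 1 + 1 / 2 by norm_num, rpow_add ha, rpow_one, ← sqrt_eq_rpow,
      div_le_div_iff₀ (by positivity) (by positivity)]
    have : t ^ 2 * c ^ 2 ≤ a * c := by nlinarith [mul_le_mul_of_nonneg_left hc₁ hc₀]
    calc (t * c) ^ 2 * √a = t ^ 2 * c ^ 2 * √a := by ring
      _ ≤ a * c * √a := by gcongr
      _ = c * (a * √a) := by ring

lemma sin_sq_div_rpow_le (σ : ℝ) {θ : ℝ} (hθ : θ ∈ Set.Icc 0 π) :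
    sin θ ^ 2 / (σ ^ 2 + sin (θ / 2) ^ 2) ^ ((3:ℝ) / 2)
      ≤ 4 * (cos (θ / 2) / √(σ ^ 2 + sin (θ / 2) ^ 2)) := by
  have hcos : 0 ≤ cos (θ / 2) :=
    cos_nonneg_of_mem_Icc ⟨by linarith [hθ.1, pi_pos], by linarith [hθ.2]⟩
  have hsin : sin θ = 2 * sin (θ / 2) * cos (θ / 2) := by rw [← sin_two_mul]; ring_nf
  calc sin θ ^ 2 / (σ ^ 2 + sin (θ / 2) ^ 2) ^ ((3:ℝ) / 2)
      = 4 * ((sin (θ / 2) * cos (θ / 2)) ^ 2 / (σ ^ 2 + sin (θ / 2) ^ 2) ^ ((3:ℝ) / 2)) := by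
        rw [hsin]; ring
    _ ≤ 4 * (cos (θ / 2) / √(σ ^ 2 + sin (θ / 2) ^ 2)) := by
        gcongr 4 * ?_
        exact sq_mul_div_rpow_le (le_add_of_nonneg_left (sq_nonneg σ)) hcos (cos_le_one _)

/-- For every σ > 0,
∫₀^π sin²θ / (σ² + sin²(θ/2))^{3/2} dθ ≤ 8 · arsinh(1/σ). -/
theorem integral_sin_sq_le_arsinh (σ : ℝ) (hσ : 0 < σ) :
    ∫ θ in (0:ℝ)..π, Real.sin θ ^ 2 / (σ ^ 2 + Real.sin (θ / 2) ^ 2) ^ ((3:ℝ) / 2)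
      ≤ 8 * Real.arsinh (1 / σ) := by
  have hintegrand : Continuous fun θ => sin θ ^ 2 / (σ ^ 2 + sin (θ / 2) ^ 2) ^ ((3:ℝ) / 2) :=
    Continuous.div (by fun_prop) (by fun_prop (disch := norm_num)) fun θ => by positivity
  have hmajorant : Continuous fun θ => 4 * (cos (θ / 2) / √(σ ^ 2 + sin (θ / 2) ^ 2)) :=
    continuous_const.mul <| Continuous.div (by fun_prop) (by fun_prop) fun θ => by positivity
  calc ∫ θ in (0:ℝ)..π, sin θ ^ 2 / (σ ^ 2 + sin (θ / 2) ^ 2) ^ ((3:ℝ) / 2)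
      ≤ ∫ θ in (0:ℝ)..π, 4 * (cos (θ / 2) / √(σ ^ 2 + sin (θ / 2) ^ 2)) :=
        intervalIntegral.integral_mono_on pi_pos.le (hintegrand.intervalIntegrable _ _)
          (hmajorant.intervalIntegrable _ _) fun θ hθ => sin_sq_div_rpow_le σ hθ
    _ = 8 * arsinh (1 / σ) := by
        rw [intervalIntegral.integral_const_mul, integral_cos_half_div_sqrt hσ]
        ring
end

section
/- For every L > 0 there exist constants C₁ > 0 and C₂ > 0, depending only on L, such that for every l ∈ (0, L], every ε ∈ (0, 1/2), and all points (r,z), (r',z') with (r−l)² + z² ≤ (lε)², (r'−l)² + z'² ≤ (lε)² and (r,z) ≠ (r',z'), one has G(r,z,r',z') · r' ≤ ((1 + C₁ ε) l² / (4π²)) · log( ((r−r')² + (z−z')²)^{−1/2} ) + C₂. -/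
open MeasureTheory Real Set

noncomputable section

/-- The open meridional half-plane Π = {(r,z) : r > 0}. -/
def Pi2 : Set (ℝ × ℝ) := {p | 0 < p.1}

/-- The Green's function G of the operator 𝓛 on Π. -/
def Gker (p q : ℝ × ℝ) : ℝ :=
  p.1 * q.1 / (8 * π ^ 2) *
    ∫ θ in (-π)..π,
      Real.cos θ / Real.sqrt ((p.2 - q.2) ^ 2 + p.1 ^ 2 + q.1 ^ 2 - 2 * p.1 * q.1 * Real.cos θ)

/-- The measure ν on Π with density 2πr w.r.t. Lebesgue measure. -/
def nuM : Measure (ℝ × ℝ) :=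
  (volume.restrict Pi2).withDensity fun p => ENNReal.ofReal (2 * π * p.1)

/-- Gζ, the Green's operator applied to ζ. -/
def Gop (ζ : ℝ × ℝ → ℝ) (p : ℝ × ℝ) : ℝ := ∫ q, Gker p q * ζ q ∂nuM

/-- The energy functional E_λ. -/
def Efun (W lam : ℝ) (ζ : ℝ × ℝ → ℝ) : ℝ :=
  (1 / 2) * ∫ p, ζ p * Gop ζ p ∂nuM - W * Real.log lam / 2 * ∫ p, p.1 ^ 2 * ζ p ∂nuM

/-- The class 𝓦𝓡_λ. -/
def WRset (lam : ℝ) : Set (ℝ × ℝ → ℝ) :=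
  {ζ | Measurable ζ ∧ (∃ M : ℝ, ∀ᵐ p ∂nuM, |ζ p| ≤ M) ∧ (∀ᵐ p ∂nuM, 0 ≤ ζ p) ∧
    ∀ t > (0 : ℝ), ∫ p, max (ζ p - t) 0 ∂nuM ≤ max (1 - t / lam) 0}

/-- The class 𝓡_λ of rearrangements λ·1_A with ν(A) = 1/λ. -/
def Rset (lam : ℝ) : Set (ℝ × ℝ → ℝ) :=
  {ζ | ∃ A : Set (ℝ × ℝ), MeasurableSet A ∧ A ⊆ Pi2 ∧ nuM A = ENNReal.ofReal (1 / lam) ∧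
    ζ =ᵐ[nuM] A.indicator fun _ => lam}

/-- The class 𝓡𝓒_λ of functions λ·1_A with ν(A) ≤ 1/λ. -/
def RCset (lam : ℝ) : Set (ℝ × ℝ → ℝ) :=
  {ζ | ∃ A : Set (ℝ × ℝ), MeasurableSet A ∧ A ⊆ Pi2 ∧ nuM A ≤ ENNReal.ofReal (1 / lam) ∧
    ζ =ᵐ[nuM] A.indicator fun _ => lam}

/-- The impulse of the flow. -/
def impulse (ζ : ℝ × ℝ → ℝ) : ℝ := (1 / 2) * ∫ p, p.1 ^ 2 * ζ p ∂nuM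

/-- The vortex cross-section Ω_λ = {(r,z) ∈ Π : Gζ(r,z) − (W log λ/2) r² > μ}. -/
def Omg (W lam μ : ℝ) (ζ : ℝ × ℝ → ℝ) : Set (ℝ × ℝ) :=
  {p | p ∈ Pi2 ∧ Gop ζ p - W * Real.log lam / 2 * p.1 ^ 2 > μ}

/-! With `a = r r'` and `d` the distance of the two points,
`G · r' = a r' / (8π²) ∫ cos θ / √(d² + 2a(1 - cos θ)) dθ`. Replacing `2(1 - cos θ)` by `θ²` costs
at most `|θ| / √a` in the integrand: the two agree to fourth order in `θ`, and Jordan's inequality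
keeps both denominators of order `√a |θ|`. The remaining integral is
`(2/√a) arsinh (π √a / d) ≤ (2/√a) log (1 + 2π √a / d)`, so
`G · r' ≤ √a r' / (4π²) · (-log d) + O(1)`, and on the disc `√a r' ≤ (1 + ε)² l² ≤ (1 + 3ε) l²`. -/

lemma sq_div_two_sub_pow_four_div_le_one_sub_cos (θ : ℝ) :
    θ ^ 2 / 2 - θ ^ 4 / 24 ≤ 1 - cos θ := by
  set x := |θ| / 2
  have hx : 0 ≤ x := by positivity
  have hx2 : x ^ 2 = θ ^ 2 / 4 := by simp only [x, div_pow, sq_abs]; ring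
  have hcos : 1 - cos θ = 2 * sin x ^ 2 := by
    have h := cos_sq x
    rw [show 2 * x = |θ| by ring, cos_abs] at h
    nlinarith [sin_sq_add_cos_sq x]
  have hsin : x ^ 2 - x ^ 4 / 3 ≤ sin x ^ 2 := by
    rcases le_or_gt (x ^ 2) 6 with h6 | h6
    · have hcube := sin_ge_sub_cube hx
      have h0 : 0 ≤ x - x ^ 3 / 6 := by nlinarith
      nlinarith [pow_le_pow_left₀ h0 hcube 2, pow_nonneg hx 6]
    · nlinarith [sq_nonneg (sin x)]
  nlinarith

lemma one_div_le_one_div_add_of_sq_sub_sq_le {s t u v : ℝ} (hs : 0 < s) (ht : 0 ≤ t)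
    (hu : s * t / 2 ≤ u) (hu0 : 0 < u) (hv : s * t ≤ v) (huv : u ≤ v)
    (hsq : v ^ 2 - u ^ 2 ≤ s ^ 2 * t ^ 4 / 12) :
    1 / u ≤ 1 / v + t / s := by
  have hv0 : 0 < v := hu0.trans_le huv
  have hprod : s ^ 3 * t ^ 4 / 2 ≤ t * (u * v) * (u + v) := by
    have h1 : s * t / 2 * (s * t) ≤ u * v := mul_le_mul hu hv (by positivity) hu0.le
    have h2 := mul_le_mul h1 (show s * t ≤ u + v by linarith) (by positivity) (by positivity)
    nlinarith [mul_le_mul_of_nonneg_left h2 ht]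
  have hkey : s * (v - u) ≤ t * (u * v) := by
    refine le_of_mul_le_mul_right ?_ (add_pos hu0 hv0)
    have hst : 0 ≤ s ^ 3 * t ^ 4 := by positivity
    nlinarith [mul_le_mul_of_nonneg_left hsq hs.le]
  rw [div_add_div _ _ hv0.ne' hs.ne', div_le_div_iff₀ hu0 (by positivity)]
  nlinarith

lemma one_div_sqrt_chord_le (d a θ : ℝ) (hd : 0 < d) (ha : 0 < a) (hθ : |θ| ≤ π) :
    1 / √(d ^ 2 + 2 * a * (1 - cos θ)) ≤ 1 / √(d ^ 2 + a * θ ^ 2) + |θ| / √a := by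
  have hs : 0 < √a := sqrt_pos.mpr ha
  have hjordan : 2 / π ^ 2 * θ ^ 2 ≤ 1 - cos θ := by linarith [cos_le_one_sub_mul_cos_sq hθ]
  have hπ : 2 / π ^ 2 * θ ^ 2 ≥ θ ^ 2 / 8 := by
    have : π ^ 2 ≤ 16 := by nlinarith [pi_le_four, pi_pos]
    rw [ge_iff_le, div_mul_eq_mul_div, div_le_div_iff₀ (by norm_num) (by positivity)]
    nlinarith [sq_nonneg θ]
  have hcos := one_sub_sq_div_two_le_cos (x := θ)
  have hquartic := sq_div_two_sub_pow_four_div_le_one_sub_cos θ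
  have hsa : √a ^ 2 = a := sq_sqrt ha.le
  have ht2 : |θ| ^ 2 = θ ^ 2 := sq_abs θ
  refine one_div_le_one_div_add_of_sq_sub_sq_le hs (abs_nonneg θ) ?_ (sqrt_pos.mpr ?_) ?_ ?_ ?_
  · refine le_sqrt_of_sq_le ?_
    nlinarith [sq_nonneg d]
  · nlinarith [sq_nonneg d]
  · refine le_sqrt_of_sq_le ?_
    nlinarith [sq_nonneg d]
  · exact sqrt_le_sqrt (by nlinarith)
  · have ht4 : |θ| ^ 4 = θ ^ 4 := by rw [show |θ| ^ 4 = (|θ| ^ 2) ^ 2 by ring, ht2]; ring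
    rw [sq_sqrt (by positivity), sq_sqrt (by nlinarith [sq_nonneg d]), hsa, ht4]
    nlinarith [mul_le_mul_of_nonneg_left hquartic ha.le]

lemma arsinh_le_log_one_add_two_mul {x : ℝ} (hx : 0 ≤ x) : arsinh x ≤ log (1 + 2 * x) := by
  refine log_le_log (by positivity) ?_
  have : √(1 + x ^ 2) ≤ 1 + x := by
    rw [sqrt_le_left (by linarith)]
    nlinarith
  linarith

lemma integral_one_div_sqrt_sq_add_mul_sq {d a : ℝ} (hd : 0 < d) (ha : 0 < a) (b : ℝ) :
    ∫ θ in (-b)..b, 1 / √(d ^ 2 + a * θ ^ 2) = 2 / √a * arsinh (√a * b / d) := by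
  set s := √a
  have hs : 0 < s := sqrt_pos.mpr ha
  have hs2 : s ^ 2 = a := sq_sqrt ha.le
  have hderiv : ∀ x ∈ uIcc (-b) b,
      HasDerivAt (fun t => 1 / s * arsinh (s * t / d)) (1 / √(d ^ 2 + a * x ^ 2)) x := by
    intro x _
    have hlin : HasDerivAt (fun t : ℝ => s * t / d) (s / d) x := by
      simpa using ((hasDerivAt_id x).const_mul s).div_const d
    refine (((hasDerivAt_arsinh _).comp x hlin).const_mul (1 / s)).congr_deriv ?_
    have e : √(1 + (s * x / d) ^ 2) = √(d ^ 2 + a * x ^ 2) / d := by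
      rw [show 1 + (s * x / d) ^ 2 = (d ^ 2 + a * x ^ 2) / d ^ 2 by rw [← hs2]; field_simp,
        sqrt_div (by positivity), sqrt_sq hd.le]
    rw [e]
    field_simp
  have hcont : Continuous fun θ : ℝ => 1 / √(d ^ 2 + a * θ ^ 2) :=
    continuous_const.div (by fun_prop) fun x => (sqrt_pos.mpr (by positivity)).ne'
  rw [intervalIntegral.integral_eq_sub_of_hasDerivAt hderiv (hcont.intervalIntegrable _ _),
    show s * -b / d = -(s * b / d) by ring, arsinh_neg]
  ring

lemma integral_cos_div_sqrt_chord_le {d a : ℝ} (hd : 0 < d) (ha : 0 < a) :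
    ∫ θ in (-π)..π, cos θ / √(d ^ 2 + 2 * a * (1 - cos θ))
      ≤ 2 / √a * (log (1 + 2 * π * √a / d) + π ^ 2) := by
  have hcont : Continuous fun θ => cos θ / √(d ^ 2 + 2 * a * (1 - cos θ)) :=
    continuous_cos.div (by fun_prop) fun θ =>
      (sqrt_pos.mpr (by nlinarith [cos_le_one θ])).ne'
  have hcont' : Continuous fun θ : ℝ => 1 / √(d ^ 2 + a * θ ^ 2) :=
    continuous_const.div (by fun_prop) fun x => (sqrt_pos.mpr (by positivity)).ne'
  calc ∫ θ in (-π)..π, cos θ / √(d ^ 2 + 2 * a * (1 - cos θ))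
      ≤ ∫ θ in (-π)..π, (1 / √(d ^ 2 + a * θ ^ 2) + π / √a) := by
        refine intervalIntegral.integral_mono_on (by linarith [pi_pos])
          (hcont.intervalIntegrable _ _) ((hcont'.add continuous_const).intervalIntegrable _ _) ?_
        intro θ hθ
        have hθπ : |θ| ≤ π := abs_le.mpr hθ
        calc cos θ / √(d ^ 2 + 2 * a * (1 - cos θ))
            ≤ 1 / √(d ^ 2 + 2 * a * (1 - cos θ)) := by gcongr; exact cos_le_one θ
          _ ≤ 1 / √(d ^ 2 + a * θ ^ 2) + |θ| / √a := one_div_sqrt_chord_le d a θ hd ha hθπ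
          _ ≤ 1 / √(d ^ 2 + a * θ ^ 2) + π / √a := by gcongr
    _ = 2 / √a * (arsinh (√a * π / d) + π ^ 2) := by
        rw [intervalIntegral.integral_add (hcont'.intervalIntegrable _ _) intervalIntegrable_const,
          integral_one_div_sqrt_sq_add_mul_sq hd ha, intervalIntegral.integral_const, smul_eq_mul]
        ring
    _ ≤ 2 / √a * (log (1 + 2 * π * √a / d) + π ^ 2) := by
        gcongr
        rw [show 2 * π * √a / d = 2 * (√a * π / d) by ring]
        exact arsinh_le_log_one_add_two_mul (by positivity)

lemma Gker_le (p q : ℝ × ℝ) (hp : 0 < p.1) (hq : 0 < q.1) {d : ℝ} (hd : 0 < d)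
    (hd2 : d ^ 2 = (p.1 - q.1) ^ 2 + (p.2 - q.2) ^ 2) :
    Gker p q ≤ √(p.1 * q.1) / (4 * π ^ 2) * (d + 2 * π * √(p.1 * q.1) + π ^ 2 - log d) := by
  have ha : 0 < p.1 * q.1 := mul_pos hp hq
  set s := √(p.1 * q.1)
  have hs : 0 < s := sqrt_pos.2 ha
  have hGker : Gker p q = s ^ 2 / (8 * π ^ 2) *
      ∫ θ in (-π)..π, cos θ / √(d ^ 2 + 2 * (p.1 * q.1) * (1 - cos θ)) := by
    rw [Gker, sq_sqrt ha.le]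
    congr 1
    refine intervalIntegral.integral_congr fun θ _ => ?_
    rw [hd2]
    ring_nf
  have hlog : log (1 + 2 * π * s / d) ≤ d + 2 * π * s - log d := by
    rw [show 1 + 2 * π * s / d = (d + 2 * π * s) / d by field_simp, log_div (by positivity) hd.ne']
    linarith [log_le_self (x := d + 2 * π * s) (by positivity)]
  calc Gker p q ≤ s ^ 2 / (8 * π ^ 2) * (2 / s * (log (1 + 2 * π * s / d) + π ^ 2)) := by
        rw [hGker]
        gcongr
        exact integral_cos_div_sqrt_chord_le hd ha
    _ = s / (4 * π ^ 2) * (log (1 + 2 * π * s / d) + π ^ 2) := by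
        field_simp
        ring
    _ ≤ s / (4 * π ^ 2) * (d + 2 * π * s + π ^ 2 - log d) := by
        gcongr
        linarith

lemma abs_sub_le_of_sq_add_sq_le {r z l ρ : ℝ} (h : (r - l) ^ 2 + z ^ 2 ≤ ρ ^ 2) (hρ : 0 ≤ ρ) :
    |r - l| ≤ ρ :=
  abs_le_of_sq_le_sq (by nlinarith [sq_nonneg z]) hρ

lemma sub_sq_add_sub_sq_le_of_mem_disc {r z r' z' l ρ : ℝ} (h : (r - l) ^ 2 + z ^ 2 ≤ ρ ^ 2)
    (h' : (r' - l) ^ 2 + z' ^ 2 ≤ ρ ^ 2) : (r - r') ^ 2 + (z - z') ^ 2 ≤ 4 * ρ ^ 2 := by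
  nlinarith [sq_nonneg (r + r' - 2 * l), sq_nonneg (z + z')]

lemma sub_sq_add_sub_sq_pos_of_ne {r z r' z' : ℝ} (h : (r, z) ≠ (r', z')) :
    0 < (r - r') ^ 2 + (z - z') ^ 2 := by
  refine (by positivity : (0 : ℝ) ≤ _).lt_of_ne' fun h0 => h ?_
  obtain ⟨hr, hz⟩ := mul_self_add_mul_self_eq_zero.1 (by simpa only [sq] using h0)
  rw [sub_eq_zero.1 hr, sub_eq_zero.1 hz]

lemma mul_sub_le_mul_neg_add {x y M B B' t T : ℝ} (hx : 0 ≤ x) (hxy : x ≤ y) (hyM : y ≤ M)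
    (hB : B ≤ B') (hB' : 0 ≤ B') (ht : t ≤ T) (hT : 0 ≤ T) :
    x * (B - t) ≤ y * -t + M * (B' + T) := by
  nlinarith [mul_le_mul_of_nonneg_left hB hx,
    mul_le_mul_of_nonneg_right (hx.trans hxy |>.trans hyM) hB',
    mul_le_mul_of_nonneg_left ht (sub_nonneg.2 hxy),
    mul_le_mul_of_nonneg_right (show y - x ≤ M by linarith) hT]

/-- For every L > 0 there exist C₁, C₂ > 0, depending only on L, such that
for every l ∈ (0,L], ε ∈ (0,1/2) and all distinct points in the disc of radius lε about (l,0),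
G(r,z,r',z')·r' ≤ ((1+C₁ε) l²/(4π²))·log(((r−r')²+(z−z')²)^{−1/2}) + C₂. -/
theorem green_log_upper_bound (L : ℝ) (hL : 0 < L) :
    ∃ C₁ > (0:ℝ), ∃ C₂ > (0:ℝ), ∀ l : ℝ, 0 < l → l ≤ L → ∀ ε : ℝ, 0 < ε → ε < 1 / 2 →
      ∀ r z r' z' : ℝ, (r - l) ^ 2 + z ^ 2 ≤ (l * ε) ^ 2 →
        (r' - l) ^ 2 + z' ^ 2 ≤ (l * ε) ^ 2 → (r, z) ≠ (r', z') →
        Gker (r, z) (r', z') * r' ≤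
          (1 + C₁ * ε) * l ^ 2 / (4 * π ^ 2) *
            Real.log (((r - r') ^ 2 + (z - z') ^ 2) ^ (-(1:ℝ) / 2)) + C₂ := by
  refine ⟨3, by norm_num, 3 * L ^ 2 * (2 * L + 3 * π * L + π ^ 2) / (4 * π ^ 2), by positivity, ?_⟩
  intro l hl hlL ε hε hε2 r z r' z' hp hq hne
  have hρ : 0 ≤ l * ε := by positivity
  obtain ⟨hr₁, hr₂⟩ := abs_le.1 (abs_sub_le_of_sq_add_sq_le hp hρ)
  obtain ⟨hr'₁, hr'₂⟩ := abs_le.1 (abs_sub_le_of_sq_add_sq_le hq hρ)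
  have hlε : l * ε ≤ l / 2 := by nlinarith
  have hr : 0 < r := by linarith
  have hr' : 0 < r' := by linarith
  have hd2 := sub_sq_add_sub_sq_pos_of_ne hne
  set d := √((r - r') ^ 2 + (z - z') ^ 2)
  have hd : 0 < d := sqrt_pos.2 hd2
  have hdL : d ≤ L :=
    (sqrt_le_left hL.le).2 (by nlinarith [sub_sq_add_sub_sq_le_of_mem_disc hp hq])
  set s := √(r * r')
  have hsl : s ≤ l * (1 + ε) := (sqrt_le_left (by positivity)).2 (by nlinarith)
  have hG := mul_le_mul_of_nonneg_right (Gker_le (r, z) (r', z') hr hr' hd (sq_sqrt hd2.le)) hr'.le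
  have hlog : log (((r - r') ^ 2 + (z - z') ^ 2) ^ (-(1:ℝ) / 2)) = -log d := by
    rw [neg_div, rpow_neg hd2.le, log_inv, ← sqrt_eq_rpow]
  have hB : d + 2 * π * s + π ^ 2 ≤ L + 3 * π * L + π ^ 2 := by nlinarith [pi_pos]
  have hx : s * r' ≤ (1 + 3 * ε) * l ^ 2 := by nlinarith
  have hy : (1 + 3 * ε) * l ^ 2 ≤ 3 * L ^ 2 := by nlinarith
  have key := mul_sub_le_mul_neg_add (by positivity) hx hy hB (by positivity)
    ((log_le_self hd.le).trans hdL) hL.le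
  rw [hlog]
  calc Gker (r, z) (r', z') * r'
      ≤ s * r' * (d + 2 * π * s + π ^ 2 - log d) / (4 * π ^ 2) := hG.trans_eq (by ring)
    _ ≤ ((1 + 3 * ε) * l ^ 2 * -log d + 3 * L ^ 2 * (L + 3 * π * L + π ^ 2 + L)) / (4 * π ^ 2) := by
        gcongr
    _ = _ := by ring
end
end
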